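/- Fix integers ℓ ≥ 1 and k ≥ 8ℓ, and set s = (k−8ℓ)/(2 + 2 ln ℓ). There exists N such that for every n ≥ N and every injective vector of nonnegative reals v : {1,…,n} → ℝ_{≥0}, the following holds. Let σ be a uniformly random permutation of {1,…,n}, let w_i = v(σ(i)), and let S' = { i : w_i is among the b(i) largest values of w_1,…,w_i }. Then E_σ[TOP_ℓ(S'; w)] ≥ (1 − ℓ·e^{−s}) · TOP_ℓ(v). -/

import Mathlib

/-! Let `B` attain `TOP_ℓ(v)`; each `e ∈ B` is beaten by fewer than `ℓ` values. If `e` arrives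
at position `i` but is not a candidate, then `j = b(i) < ℓ`, and `e` together with `j` values
larger than it all arrive among the first `β_j`. A union bound over `j < ℓ` and over the
`C(ℓ, j)` choices of the larger values bounds the probability of this by
`∑_{j<ℓ} C(ℓ, j) (β_j / n)^{j+1}`, and `β_j` is chosen so that each term is at most `e^{-s}`.
So each `e ∈ B` lies in `S'` with probability at least `1 - ℓ e^{-s}`, and `B ∩ S'` is
feasible for `TOP_ℓ(S'; w)`. -/

open Finset

/-- `TOPval ℓ A v` is the maximum of `∑ i ∈ B, v i` over `B ⊆ A` with `|B| ≤ ℓ`. -/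
noncomputable def TOPval {n : ℕ} (ℓ : ℕ) (A : Finset (Fin n)) (v : Fin n → ℝ) : ℝ :=
  ((A.powerset.filter fun B => B.card ≤ ℓ).image fun B => ∑ i ∈ B, v i).max'
    (Finset.Nonempty.image
      ⟨∅, Finset.mem_filter.mpr ⟨Finset.empty_mem_powerset A, by simp⟩⟩ _)

/-- The parameter `s = (k − 8ℓ)/(2 + 2 ln ℓ)`. -/
noncomputable def sParam (ℓ k : ℕ) : ℝ := ((k : ℝ) - 8 * ℓ) / (2 + 2 * Real.log ℓ)

/-- The partition points `β₀ = ⌊n e^{−s}/(2eℓ)⌋`, `βⱼ = ⌊j n e^{−s/j}/(2eℓ)⌋` for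
`1 ≤ j ≤ ℓ − 1`, and `βⱼ = n` for `j ≥ ℓ`. -/
noncomputable def betaFun (ℓ k n : ℕ) (j : ℕ) : ℕ :=
  if j = 0 then ⌊(n : ℝ) * Real.exp (-sParam ℓ k) / (2 * Real.exp 1 * ℓ)⌋₊
  else if j < ℓ then ⌊(j : ℝ) * n * Real.exp (-sParam ℓ k / j) / (2 * Real.exp 1 * ℓ)⌋₊
  else n

/-- `bFun ℓ k n i` is the unique `j ∈ {0,…,ℓ}` with `β_{j−1} < i ≤ β_j` (for `1 ≤ i ≤ n`),
defined as the least `j` with `i ≤ β_j`. -/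
noncomputable def bFun (ℓ k n : ℕ) (i : ℕ) : ℕ := sInf {j : ℕ | i ≤ betaFun ℓ k n j}

/-- The candidate set of `ALG'^β`: arrival `i` is a candidate iff `w i` is among the
`b(i)` largest values of `w₁,…,wᵢ`. -/
noncomputable def candSet (ℓ k : ℕ) {n : ℕ} (w : Fin n → ℝ) : Finset (Fin n) :=
  Finset.univ.filter fun i =>
    (Finset.univ.filter fun j : Fin n => j ≤ i ∧ w i ≤ w j).card ≤ bFun ℓ k n ((i : ℕ) + 1)

/-- The accepted set of `ALG^β`: arrival `i` is accepted iff it is a candidate and fewer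
than `k` arrivals were accepted before it, i.e. the first at most `k` candidates. -/
noncomputable def secAccept (ℓ k : ℕ) {n : ℕ} (w : Fin n → ℝ) : Finset (Fin n) :=
  (candSet ℓ k w).filter fun i => ((candSet ℓ k w).filter fun j => j < i).card < k

open Equiv Real
open scoped Nat

section PermCounting

variable {α : Type*} [Fintype α] [DecidableEq α]

theorem card_perm_eqOn (T : Finset α) {f : α → α} (hf : Set.InjOn f T) :
    #{σ : Perm α | ∀ x ∈ T, σ x = f x} = (Fintype.card α - #T)! := by
  set U : Finset α := T.image f
  have hbij : Set.BijOn f T U := by rw [coe_image]; exact hf.bijOn_image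
  have hcompl : Fintype.card ((T : Set α)ᶜ : Set α) = Fintype.card ((U : Set α)ᶜ : Set α) := by
    rw [Fintype.card_compl_set, Fintype.card_compl_set]
    simp [U, card_image_of_injOn hf]
  have hextend : {σ : Perm α // ∀ x ∈ T, σ x = f x}
      ≃ (((T : Set α)ᶜ : Set α) ≃ ((U : Set α)ᶜ : Set α)) :=
    (subtypeEquivRight (q := fun σ : Perm α => ∀ x : (T : Set α), σ x = f x) fun _ =>
      ⟨fun h x => h x x.2, fun h x hx => h ⟨x, hx⟩⟩).trans
      (Equiv.Set.compl (hbij.equiv f))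
  rw [← Fintype.card_subtype, Fintype.card_congr hextend,
    Fintype.card_equiv (Fintype.equivOfCardEq hcompl), Fintype.card_compl_set]
  simp

theorem card_perm_mapsTo (T A : Finset α) :
    #{σ : Perm α | ∀ x ∈ T, σ x ∈ A} = (#A).descFactorial #T * (Fintype.card α - #T)! := by
  set t := (univ : Finset (T → α)).filter fun g => Function.Injective g ∧ ∀ x, g x ∈ A
  have hmaps : ∀ σ ∈ ({σ : Perm α | ∀ x ∈ T, σ x ∈ A} : Finset (Perm α)),
      (fun x : T => σ x) ∈ t := fun σ hσ => by
    simp only [t, mem_filter, mem_univ, true_and] at hσ ⊢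
    exact ⟨fun a b h => Subtype.ext (σ.injective h), fun x => hσ x x.2⟩
  have hfiber : ∀ g ∈ t, #{σ ∈ ({σ : Perm α | ∀ x ∈ T, σ x ∈ A} : Finset (Perm α)) |
      (fun x : T => σ x) = g} = (Fintype.card α - #T)! := fun g hg => by
    simp only [t, mem_filter, mem_univ, true_and] at hg
    let f : α → α := fun x => if h : x ∈ T then g ⟨x, h⟩ else x
    have hfT : ∀ x (h : x ∈ T), f x = g ⟨x, h⟩ := fun x h => dif_pos h
    rw [← card_perm_eqOn T (f := f) fun x hx y hy hxy => by
      simpa using hg.1 ((hfT x hx).symm.trans (hxy.trans (hfT y hy)))]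
    congr 1
    ext σ
    simp only [mem_filter, mem_univ, true_and, funext_iff]
    refine ⟨fun ⟨_, h⟩ x hx => (h ⟨x, hx⟩).trans (hfT x hx).symm, fun h => ⟨fun x hx => ?_,
      fun x => (h x x.2).trans (hfT x x.2)⟩⟩
    rw [h x hx, hfT x hx]; exact hg.2 _
  have ht : #t = (#A).descFactorial #T := by
    rw [← Fintype.card_subtype, ← Fintype.card_coe A, ← Fintype.card_coe T,
      ← Fintype.card_embedding_eq]
    exact Fintype.card_congr
      { toFun g := ⟨fun x => ⟨g.1 x, g.2.2 x⟩, fun a b h => g.2.1 (congrArg Subtype.val h)⟩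
        invFun j := ⟨fun x => j x, fun a b h => j.injective (Subtype.ext h), fun x => (j x).2⟩
        left_inv _ := rfl
        right_inv _ := rfl }
  rw [card_eq_sum_card_fiberwise hmaps, sum_congr rfl hfiber, sum_const, smul_eq_mul, ht]

end PermCounting

theorem card_perm_inv_lt_le {n : ℕ} (T : Finset (Fin n)) (m : ℕ) :
    #{σ : Perm (Fin n) | ∀ x ∈ T, (σ⁻¹ x : ℕ) < m} ≤ m.descFactorial #T * (n - #T)! := by
  calc #{σ : Perm (Fin n) | ∀ x ∈ T, (σ⁻¹ x : ℕ) < m}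
      = (#{p : Fin n | (p : ℕ) < m}).descFactorial #T * (Fintype.card (Fin n) - #T)! :=
        (card_equiv (Equiv.inv _) fun σ => by simp).trans (card_perm_mapsTo T _)
    _ ≤ m.descFactorial #T * (n - #T)! := by
      rw [Fintype.card_fin, Fin.card_filter_val_lt]
      exact Nat.mul_le_mul_right _ (Nat.descFactorial_le _ (min_le_right n m))

theorem Nat.descFactorial_mul_pow_le {m n : ℕ} (h : m ≤ n) (t : ℕ) :
    m.descFactorial t * n ^ t ≤ m ^ t * n.descFactorial t := by
  induction t with
  | zero => simp
  | succ t ih =>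
    have key : (m - t) * n ≤ m * (n - t) := by
      rw [Nat.sub_mul, Nat.mul_sub, mul_comm t n]
      exact Nat.sub_le_sub_left (Nat.mul_le_mul_right t h) _
    calc m.descFactorial (t + 1) * n ^ (t + 1)
        = ((m - t) * n) * (m.descFactorial t * n ^ t) := by
          rw [Nat.descFactorial_succ, pow_succ]; ring
      _ ≤ (m * (n - t)) * (m ^ t * n.descFactorial t) := Nat.mul_le_mul key ih
      _ = m ^ (t + 1) * n.descFactorial (t + 1) := by
          rw [Nat.descFactorial_succ, pow_succ]; ring

theorem Nat.descFactorial_mul_factorial_sub_le {m n : ℕ} (h : m ≤ n) (t : ℕ) :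
    (m.descFactorial t * (n - t)! : ℝ) ≤ ((m : ℝ) / n) ^ t * n ! := by
  rcases lt_or_ge n t with hnt | htn
  · rw [Nat.descFactorial_eq_zero_iff_lt.mpr (h.trans_lt hnt)]
    simp only [Nat.cast_zero, zero_mul]
    positivity
  rcases n.eq_zero_or_pos with rfl | hn
  · obtain rfl : t = 0 := by omega
    simp
  have hnt : (0 : ℝ) < (n : ℝ) ^ t := by positivity
  have key : (m.descFactorial t * n ^ t * (n - t)! : ℝ) ≤ m ^ t * n ! := by
    rw [← Nat.factorial_mul_descFactorial htn]
    exact_mod_cast calc m.descFactorial t * n ^ t * (n - t)!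
        ≤ m ^ t * n.descFactorial t * (n - t)! :=
          Nat.mul_le_mul_right _ (Nat.descFactorial_mul_pow_le h t)
      _ = m ^ t * ((n - t)! * n.descFactorial t) := by ring
  rw [div_pow, div_mul_eq_mul_div, le_div_iff₀ hnt]
  linarith

section TOPval

variable {n ℓ : ℕ}

theorem sum_le_TOPval {A B : Finset (Fin n)} (v : Fin n → ℝ) (hBA : B ⊆ A) (hB : #B ≤ ℓ) :
    ∑ i ∈ B, v i ≤ TOPval ℓ A v := by
  apply le_max'
  exact mem_image.mpr ⟨B, mem_filter.mpr ⟨mem_powerset.mpr hBA, hB⟩, rfl⟩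

theorem exists_eq_TOPval (A : Finset (Fin n)) (v : Fin n → ℝ) :
    ∃ B ⊆ A, #B ≤ ℓ ∧ TOPval ℓ A v = ∑ i ∈ B, v i := by
  obtain ⟨B, hB, hBsum⟩ := mem_image.mp (max'_mem _ _ : TOPval ℓ A v ∈ _)
  rw [mem_filter, mem_powerset] at hB
  exact ⟨B, hB.1, hB.2, hBsum.symm⟩

/-- Exchanging `e` for a larger value outside `B` would beat the optimum. -/
theorem card_larger_lt_of_TOPval_eq {v : Fin n → ℝ} {B : Finset (Fin n)} (hBcard : #B ≤ ℓ)
    (hB : TOPval ℓ univ v = ∑ i ∈ B, v i) {e : Fin n} (he : e ∈ B) :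
    #{x | v e < v x} < ℓ := by
  by_contra! hL
  obtain ⟨x, hxL, hxB⟩ : ∃ x ∈ ({x | v e < v x} : Finset (Fin n)), x ∉ B := by
    by_contra! hsub
    have : ({x | v e < v x} : Finset (Fin n)) ⊆ B.erase e := fun x hx =>
      mem_erase.mpr ⟨fun h => by simp [h] at hx, hsub x hx⟩
    have := card_le_card this
    rw [card_erase_of_mem he] at this
    have := card_pos.mpr ⟨e, he⟩
    omega
  have hxe : x ∉ B.erase e := fun h => hxB (mem_of_mem_erase h)
  have hswap := sum_le_TOPval (ℓ := ℓ) v (subset_univ (insert x (B.erase e))) (by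
    rw [card_insert_of_notMem hxe, card_erase_of_mem he]
    have := card_pos.mpr ⟨e, he⟩
    omega)
  rw [sum_insert hxe, sum_erase_eq_sub he, hB] at hswap
  have : v e < v x := (mem_filter.mp hxL).2
  linarith

end TOPval

section Schedule

variable {ℓ k n : ℕ}

theorem sParam_nonneg (hℓ : 1 ≤ ℓ) (hk : 8 * ℓ ≤ k) : 0 ≤ sParam ℓ k := by
  have : (8 * ℓ : ℝ) ≤ k := by exact_mod_cast hk
  have : 0 ≤ Real.log ℓ := Real.log_nonneg (by exact_mod_cast hℓ)
  unfold sParam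
  apply div_nonneg <;> linarith

theorem betaFun_self (hℓ : ℓ ≠ 0) : betaFun ℓ k n ℓ = n := by
  simp [betaFun, hℓ]

theorem le_betaFun_bFun (hℓ : ℓ ≠ 0) {i : ℕ} (hi : i ≤ n) :
    i ≤ betaFun ℓ k n (bFun ℓ k n i) :=
  Nat.sInf_mem (s := {j | i ≤ betaFun ℓ k n j}) ⟨ℓ, by simpa [betaFun_self hℓ]⟩

theorem one_le_two_mul_exp_one_mul (hℓ : 1 ≤ ℓ) : 1 ≤ 2 * exp 1 * ℓ := by
  have : (1 : ℝ) ≤ ℓ := by exact_mod_cast hℓ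
  nlinarith [add_one_le_exp (1 : ℝ)]

theorem betaFun_zero_le (hℓ : 1 ≤ ℓ) : (betaFun ℓ k n 0 : ℝ) ≤ exp (-sParam ℓ k) * n :=
  calc (betaFun ℓ k n 0 : ℝ) ≤ n * exp (-sParam ℓ k) / (2 * exp 1 * ℓ) := by
        rw [betaFun, if_pos rfl]
        exact Nat.floor_le (by positivity)
    _ ≤ n * exp (-sParam ℓ k) := div_le_self (by positivity) (one_le_two_mul_exp_one_mul hℓ)
    _ = exp (-sParam ℓ k) * n := mul_comm _ _

theorem betaFun_le_of_lt {j : ℕ} (hj0 : j ≠ 0) (hj : j < ℓ) :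
    (betaFun ℓ k n j : ℝ) ≤ j / (2 * exp 1 * ℓ) * exp (-sParam ℓ k / j) * n := by
  rw [betaFun, if_neg hj0, if_pos hj]
  exact (Nat.floor_le (by positivity)).trans_eq (by ring)

theorem betaFun_le (hℓ : 1 ≤ ℓ) (hs : 0 ≤ sParam ℓ k) (j : ℕ) : betaFun ℓ k n j ≤ n := by
  rcases eq_or_ne j 0 with rfl | hj0
  · have : exp (-sParam ℓ k) ≤ 1 := exp_le_one_iff.mpr (by linarith)
    exact_mod_cast (betaFun_zero_le hℓ).trans (mul_le_of_le_one_left (by positivity) this)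
  by_cases hj : j < ℓ
  · have hjd : (j : ℝ) / (2 * exp 1 * ℓ) ≤ 1 := by
      have : (j : ℝ) ≤ ℓ := by exact_mod_cast hj.le
      rw [div_le_one (by linarith [one_le_two_mul_exp_one_mul hℓ])]
      nlinarith [add_one_le_exp (1 : ℝ)]
    have hexp : exp (-sParam ℓ k / j) ≤ 1 :=
      exp_le_one_iff.mpr (div_nonpos_of_nonpos_of_nonneg (by linarith) (by positivity))
    exact_mod_cast (betaFun_le_of_lt hj0 hj).trans
      (mul_le_of_le_one_left (by positivity) (mul_le_one₀ hjd (by positivity) hexp))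
  · simp [betaFun, hj0, hj]

theorem choose_mul_div_pow_le_one (hℓ : 1 ≤ ℓ) {c : ℕ} (hc : c ≤ ℓ) (j : ℕ) :
    (c.choose j : ℝ) * (j / (2 * exp 1 * ℓ)) ^ (j + 1) ≤ 1 := by
  have hd := one_le_two_mul_exp_one_mul hℓ
  have hchoose : (c.choose j : ℝ) * j ! ≤ ℓ ^ j := by
    have := Nat.choose_le_pow_div (α := ℝ) j c
    rw [le_div_iff₀ (by positivity)] at this
    exact this.trans (by gcongr)
  have hpow : (j : ℝ) ^ j ≤ exp 1 ^ j * j ! := by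
    have := pow_div_factorial_le_exp (j : ℝ) (by positivity) j
    rwa [div_le_iff₀ (by positivity), ← exp_one_pow] at this
  have htwo : (j : ℝ) ≤ 2 ^ j := by exact_mod_cast Nat.lt_two_pow_self.le
  calc (c.choose j : ℝ) * (j / (2 * exp 1 * ℓ)) ^ (j + 1)
      = (c.choose j * j !) * j ^ j * j / ((2 * exp 1 * ℓ) ^ j * (2 * exp 1 * ℓ) * j !) := by
        rw [div_pow]
        field_simp
        ring
    _ ≤ ℓ ^ j * (exp 1 ^ j * j !) * 2 ^ j / ((2 * exp 1 * ℓ) ^ j * (2 * exp 1 * ℓ) * j !) := by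
        gcongr
    _ = 1 / (2 * exp 1 * ℓ) := by
        field_simp
        ring
    _ ≤ 1 := div_le_one_of_le₀ hd (by positivity)

theorem choose_mul_betaFun_div_pow_le (hℓ : 1 ≤ ℓ) (hs : 0 ≤ sParam ℓ k) {c j : ℕ} (hc : c ≤ ℓ)
    (hj : j < ℓ) : (c.choose j : ℝ) * (betaFun ℓ k n j / n) ^ (j + 1) ≤ exp (-sParam ℓ k) := by
  rcases eq_or_ne j 0 with rfl | hj0
  · simpa using div_le_of_le_mul₀ (by positivity) (by positivity) (betaFun_zero_le hℓ)
  have hratio : (betaFun ℓ k n j : ℝ) / n ≤ j / (2 * exp 1 * ℓ) * exp (-sParam ℓ k / j) :=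
    div_le_of_le_mul₀ (by positivity) (by positivity) (betaFun_le_of_lt hj0 hj)
  have hexp : exp (-sParam ℓ k / j) ^ (j + 1) ≤ exp (-sParam ℓ k) := by
    rw [← exp_nat_mul, exp_le_exp]
    have : 0 ≤ sParam ℓ k / j := by positivity
    have : ((j + 1 : ℕ) : ℝ) * (-sParam ℓ k / j) = -sParam ℓ k - sParam ℓ k / j := by
      field_simp
      push_cast
      ring
    linarith
  calc (c.choose j : ℝ) * (betaFun ℓ k n j / n) ^ (j + 1)
      ≤ (c.choose j : ℝ) * (j / (2 * exp 1 * ℓ) * exp (-sParam ℓ k / j)) ^ (j + 1) := by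
        gcongr
    _ = (c.choose j * (j / (2 * exp 1 * ℓ)) ^ (j + 1)) * exp (-sParam ℓ k / j) ^ (j + 1) := by
        ring
    _ ≤ 1 * exp (-sParam ℓ k) := by
        gcongr
        exact choose_mul_div_pow_le_one hℓ hc j
    _ = exp (-sParam ℓ k) := one_mul _

theorem choose_mul_descFactorial_betaFun_le (hℓ : 1 ≤ ℓ) (hs : 0 ≤ sParam ℓ k) {c j : ℕ}
    (hc : c ≤ ℓ) (hj : j < ℓ) :
    (c.choose j * (betaFun ℓ k n j).descFactorial (j + 1) * (n - (j + 1))! : ℝ)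
      ≤ exp (-sParam ℓ k) * n ! :=
  calc (c.choose j * (betaFun ℓ k n j).descFactorial (j + 1) * (n - (j + 1))! : ℝ)
      = c.choose j * ((betaFun ℓ k n j).descFactorial (j + 1) * (n - (j + 1))!) := by ring
    _ ≤ c.choose j * ((betaFun ℓ k n j / n) ^ (j + 1) * n !) :=
        mul_le_mul_of_nonneg_left
          (Nat.descFactorial_mul_factorial_sub_le (betaFun_le hℓ hs j) _) (by positivity)
    _ = (c.choose j * (betaFun ℓ k n j / n) ^ (j + 1)) * n ! := by ring
    _ ≤ exp (-sParam ℓ k) * n ! := by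
        gcongr
        exact choose_mul_betaFun_div_pow_le hℓ hs hc hj

end Schedule

section Candidates

variable {ℓ k n : ℕ} {v : Fin n → ℝ}

/-- Positions are 0-based: `(σ⁻¹ x : ℕ) < β` says that `x` is among the first `β` arrivals. -/
theorem exists_early_of_notMem_candSet (hv : Function.Injective v) {e : Fin n}
    {σ : Perm (Fin n)} (hL : #{x | v e < v x} < ℓ)
    (hσ : σ⁻¹ e ∉ candSet ℓ k fun i => v (σ i)) :
    ∃ j < ℓ, ∃ S ⊆ ({x | v e < v x} : Finset (Fin n)), #S = j ∧
      ∀ x ∈ insert e S, (σ⁻¹ x : ℕ) < betaFun ℓ k n j := by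
  set i := σ⁻¹ e
  set b := bFun ℓ k n (i + 1)
  set L : Finset (Fin n) := {x | v e < v x}
  set D : Finset (Fin n) := {x | x ≤ i ∧ v (σ i) ≤ v (σ x)}
  have hbD : b < #D := by
    rw [candSet, mem_filter, not_and, not_le] at hσ
    exact hσ (mem_univ _)
  have hσi : σ i = e := by simp [i]
  have hiD : i ∈ D := by simp [D]
  have hDL : #(D.erase i) ≤ #{x ∈ L | σ⁻¹ x < i} := by
    refine card_le_card_of_injOn σ (fun x hx => ?_) σ.injective.injOn
    obtain ⟨hxi, hxD⟩ := mem_erase.mp hx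
    obtain ⟨hxi', hvx⟩ := (mem_filter.mp hxD).2
    rw [hσi] at hvx
    have hσx : σ x ≠ e := fun h => hxi (by simp [i, ← h])
    simpa [L] using ⟨lt_of_le_of_ne hvx fun h => hσx (hv h.symm), lt_of_le_of_ne hxi' hxi⟩
  rw [card_erase_of_mem hiD] at hDL
  obtain ⟨S, hS, hScard⟩ := exists_subset_card_eq (show b ≤ #{x ∈ L | σ⁻¹ x < i} by omega)
  have hbℓ : b < ℓ := by
    have := card_le_card (filter_subset (fun x => σ⁻¹ x < i) L)
    omega
  have hiβ : (i : ℕ) + 1 ≤ betaFun ℓ k n b := le_betaFun_bFun (by omega) i.isLt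
  refine ⟨b, hbℓ, S, hS.trans (filter_subset _ L), hScard, fun x hx => ?_⟩
  rcases mem_insert.mp hx with rfl | hxS
  · omega
  · have : σ⁻¹ x < i := (mem_filter.mp (hS hxS)).2
    omega

theorem card_notMem_candSet_le (hs : 0 ≤ sParam ℓ k) (hv : Function.Injective v) {e : Fin n}
    (hL : #{x | v e < v x} < ℓ) :
    (#{σ : Perm (Fin n) | σ⁻¹ e ∉ candSet ℓ k fun i => v (σ i)} : ℝ)
      ≤ ℓ * exp (-sParam ℓ k) * n ! := by
  have hℓ : 1 ≤ ℓ := by omega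
  set L : Finset (Fin n) := {x | v e < v x}
  have heL : e ∉ L := by simp [L]
  have hcover : ({σ : Perm (Fin n) | σ⁻¹ e ∉ candSet ℓ k fun i => v (σ i)} : Finset _)
      ⊆ (range ℓ).biUnion fun j => (L.powersetCard j).biUnion fun S =>
        {σ : Perm (Fin n) | ∀ x ∈ insert e S, (σ⁻¹ x : ℕ) < betaFun ℓ k n j} := by
    intro σ hσ
    obtain ⟨j, hj, S, hSL, hS, hearly⟩ := exists_early_of_notMem_candSet hv hL (mem_filter.mp hσ).2
    simp only [mem_biUnion, mem_range, mem_powersetCard, mem_filter, mem_univ, true_and]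
    exact ⟨j, hj, S, ⟨hSL, hS⟩, hearly⟩
  calc (#{σ : Perm (Fin n) | σ⁻¹ e ∉ candSet ℓ k fun i => v (σ i)} : ℝ)
      ≤ ∑ j ∈ range ℓ, ∑ S ∈ L.powersetCard j,
          (#{σ : Perm (Fin n) | ∀ x ∈ insert e S, (σ⁻¹ x : ℕ) < betaFun ℓ k n j} : ℝ) := by
        exact_mod_cast (card_le_card hcover).trans
          (card_biUnion_le.trans (sum_le_sum fun j _ => card_biUnion_le))
    _ ≤ ∑ j ∈ range ℓ, ∑ S ∈ L.powersetCard j,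
          ((betaFun ℓ k n j).descFactorial (j + 1) * (n - (j + 1))! : ℝ) := by
        gcongr with j hj S hS
        obtain ⟨hSL, hScard⟩ := mem_powersetCard.mp hS
        have hcard : #(insert e S) = j + 1 := by
          rw [card_insert_of_notMem fun h => heL (hSL h), hScard]
        exact_mod_cast hcard ▸ card_perm_inv_lt_le (insert e S) (betaFun ℓ k n j)
    _ = ∑ j ∈ range ℓ,
          ((#L).choose j * (betaFun ℓ k n j).descFactorial (j + 1) * (n - (j + 1))! : ℝ) := by
        simp only [sum_const, card_powersetCard, nsmul_eq_mul, mul_assoc]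
    _ ≤ ∑ _j ∈ range ℓ, exp (-sParam ℓ k) * n ! := by
        refine sum_le_sum fun j hj => ?_
        exact choose_mul_descFactorial_betaFun_le hℓ hs hL.le (mem_range.mp hj)
    _ = ℓ * exp (-sParam ℓ k) * n ! := by simp [mul_assoc]

theorem card_mem_candSet_ge (hs : 0 ≤ sParam ℓ k) (hv : Function.Injective v) {e : Fin n}
    (hL : #{x | v e < v x} < ℓ) :
    (1 - ℓ * exp (-sParam ℓ k)) * n !
      ≤ #{σ : Perm (Fin n) | σ⁻¹ e ∈ candSet ℓ k fun i => v (σ i)} := by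
  have hsplit := card_filter_add_card_filter_not (s := (univ : Finset (Perm (Fin n))))
    fun σ => σ⁻¹ e ∈ candSet ℓ k fun i => v (σ i)
  rw [card_univ, Fintype.card_perm, Fintype.card_fin] at hsplit
  have hbad := card_notMem_candSet_le hs hv hL
  have : (#{σ : Perm (Fin n) | σ⁻¹ e ∈ candSet ℓ k fun i => v (σ i)} : ℝ)
      + #{σ : Perm (Fin n) | σ⁻¹ e ∉ candSet ℓ k fun i => v (σ i)} = n ! := by
    exact_mod_cast hsplit
  linarith

end Candidates

theorem sum_mul_card_le_sum_TOPval {ℓ n : ℕ} (C : Perm (Fin n) → Finset (Fin n))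
    (v : Fin n → ℝ) {B : Finset (Fin n)} (hB : #B ≤ ℓ) :
    ∑ e ∈ B, v e * #{σ : Perm (Fin n) | σ⁻¹ e ∈ C σ}
      ≤ ∑ σ : Perm (Fin n), TOPval ℓ (C σ) fun i => v (σ i) := by
  have hswap : ∑ e ∈ B, v e * #{σ : Perm (Fin n) | σ⁻¹ e ∈ C σ}
      = ∑ σ : Perm (Fin n), ∑ e ∈ B with σ⁻¹ e ∈ C σ, v e := by
    simp only [sum_filter]
    rw [sum_comm]
    refine sum_congr rfl fun e _ => ?_
    rw [← sum_filter, sum_const, nsmul_eq_mul, mul_comm]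
  rw [hswap]
  refine sum_le_sum fun σ _ => ?_
  set t := {e ∈ B | σ⁻¹ e ∈ C σ}
  calc ∑ e ∈ t, v e = ∑ i ∈ t.map σ.symm.toEmbedding, v (σ i) := by simp [sum_map]
    _ ≤ TOPval ℓ (C σ) fun i => v (σ i) :=
      sum_le_TOPval _ (fun i hi => (by simpa [t, Perm.inv_def] using hi : σ i ∈ B ∧ i ∈ C σ).2)
        ((card_map _).trans_le ((card_filter_le _ _).trans hB))

/-- **Performance of the capacity-unconstrained secretary algorithm `ALG'^β`
(Lemma 3.3 of Ezra–Feldman–Nehama).**  Fix `ℓ ≥ 1`, `k ≥ 8ℓ`, `s = (k−8ℓ)/(2+2 ln ℓ)`.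
For all large enough `n` and every injective vector of nonnegative values `v`, if the
arrival order is a uniformly random permutation then the candidate set `S'` of `ALG'^β`
satisfies `E_σ[TOP_ℓ(S'; w)] ≥ (1 − ℓ·e^{−s}) · TOP_ℓ(v)`. -/
theorem secretary_alg_beta_unconstrained (ℓ k : ℕ) (hℓ : 1 ≤ ℓ) (hk : 8 * ℓ ≤ k) :
    ∃ N : ℕ, ∀ n : ℕ, N ≤ n → ∀ v : Fin n → ℝ, Function.Injective v → (∀ i, 0 ≤ v i) →
      (1 - ℓ * Real.exp (-sParam ℓ k)) * TOPval ℓ Finset.univ v ≤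
        ((n.factorial : ℝ))⁻¹ * ∑ σ : Equiv.Perm (Fin n),
          TOPval ℓ (candSet ℓ k (fun i => v (σ i))) (fun i => v (σ i)) := by
  refine ⟨0, fun n _ v hv hv0 => ?_⟩
  obtain ⟨B, -, hBcard, hB⟩ := exists_eq_TOPval (ℓ := ℓ) univ v
  have hn : (n ! : ℝ) ≠ 0 := by positivity
  calc (1 - ℓ * exp (-sParam ℓ k)) * TOPval ℓ univ v
      = (n ! : ℝ)⁻¹ * ∑ e ∈ B, v e * ((1 - ℓ * exp (-sParam ℓ k)) * n !) := by
        rw [hB, mul_sum, mul_sum]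
        exact sum_congr rfl fun e _ => by field_simp
    _ ≤ (n ! : ℝ)⁻¹ *
          ∑ e ∈ B, v e * #{σ : Perm (Fin n) | σ⁻¹ e ∈ candSet ℓ k fun i => v (σ i)} := by
        gcongr with e he
        · exact hv0 e
        · exact card_mem_candSet_ge (sParam_nonneg hℓ hk) hv
            (card_larger_lt_of_TOPval_eq hBcard hB he)
    _ ≤ _ := by
        gcongr
        exact sum_mul_card_le_sum_TOPval _ v hBcard
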